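/- Let H be a real Hilbert space with fundamental symmetry Θ and Krein inner product B(x, y) := ⟪x, Θ y⟫. Let W be a closed subspace of H which is hypermaximal neutral, i.e. W = {v ∈ H : B(v, w) = 0 for all w ∈ W}. Then there exists a unique linear map u : H → H such that u ∘ u = id, B(u x, u y) = −B(x, y) for all x, y, u ∘ Θ = −Θ ∘ u, and the fixed-point set of u is exactly W, i.e. {v ∈ H : u v = v} = W. -/

import Mathlib

open scoped RealInnerProductSpace

/-!
Since `W` is neutral and equals its `B`-orthogonal companion, `Θ` exchanges `W` and `Wᗮ`.
Hence the orthogonal reflection in `W` anticommutes with `Θ`, which makes it an involutive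
adapted anti-isometry fixing exactly `W`. Conversely, if `u` anticommutes with `Θ` and fixes
`W`, then for `v ∈ Wᗮ` the vector `Θ v` lies in `W`, so `Θ (u v) = -u (Θ v) = -Θ v`, i.e.
`u v = -v`: `u` is the reflection in `W`.
-/

namespace Submodule

variable {𝕜 E : Type*} [RCLike 𝕜] [NormedAddCommGroup E] [InnerProductSpace 𝕜 E]
  (K : Submodule 𝕜 E) [K.HasOrthogonalProjection]

theorem apply_eq_reflection_of_eq_self_of_eq_neg (u : E →ₗ[𝕜] E)
    (hK : ∀ x ∈ K, u x = x) (hKperp : ∀ x ∈ Kᗮ, u x = -x) (x : E) :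
    u x = K.reflection x := by
  have hsplit : x = K.starProjection x + (x - K.starProjection x) := by abel
  rw [hsplit, map_add, hK _ (K.starProjection_apply_mem x),
    hKperp _ (K.sub_starProjection_mem_orthogonal x), ← hsplit, reflection_apply, two_smul]
  abel

variable {K}

theorem apply_eq_reflection_of_anticomm (Θ : E →ₗ[𝕜] E) (hΘ2 : ∀ x, Θ (Θ x) = x)
    (hΘK : ∀ v ∈ Kᗮ, Θ v ∈ K) (u : E →ₗ[𝕜] E) (hΘu : ∀ x, u (Θ x) = -Θ (u x))
    (hK : ∀ x ∈ K, u x = x) (x : E) :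
    u x = K.reflection x := by
  refine K.apply_eq_reflection_of_eq_self_of_eq_neg u hK (fun v hv => ?_) x
  have hΘuv : Θ (u v) = Θ (-v) := by
    rw [map_neg, ← neg_eq_iff_eq_neg, ← hΘu, hK _ (hΘK v hv)]
  simpa only [hΘ2] using congrArg Θ hΘuv

theorem reflection_anticomm (Θ : E →ₗ[𝕜] E) (hΘ2 : ∀ x, Θ (Θ x) = x)
    (hΘK : ∀ v ∈ K, Θ v ∈ Kᗮ) (hΘKperp : ∀ v ∈ Kᗮ, Θ v ∈ K) (x : E) :
    K.reflection (Θ x) = -Θ (K.reflection x) := by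
  -- `-Θ ∘ R ∘ Θ` is again the identity on `K` and minus the identity on `Kᗮ`.
  have hconj := K.apply_eq_reflection_of_eq_self_of_eq_neg
    (-(Θ ∘ₗ K.reflection.toLinearMap ∘ₗ Θ))
    (fun w hw => by
      simp [reflection_mem_subspace_orthogonalComplement_eq_neg (hΘK w hw), hΘ2])
    (fun v hv => by simp [reflection_mem_subspace_eq_self (hΘKperp v hv), hΘ2])
    (Θ x)
  simpa [hΘ2] using hconj.symm

end Submodule

section Krein

variable {H : Type*} [NormedAddCommGroup H] [InnerProductSpace ℝ H]
  {Θ : H →L[ℝ] H} {W : Submodule ℝ H}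

theorem apply_mem_orthogonal_of_neutral (hW : ∀ v ∈ W, ∀ w ∈ W, ⟪v, Θ w⟫ = 0) :
    ∀ w ∈ W, Θ w ∈ Wᗮ :=
  fun w hw => (Submodule.mem_orthogonal W (Θ w)).mpr fun v hv => hW v hv w hw

theorem apply_mem_of_mem_orthogonal_of_maximal (hΘ2 : ∀ x, Θ (Θ x) = x)
    (hΘsym : ∀ x y, ⟪Θ x, y⟫ = ⟪x, Θ y⟫) (hW : ∀ v, (∀ w ∈ W, ⟪v, Θ w⟫ = 0) → v ∈ W) :
    ∀ v ∈ Wᗮ, Θ v ∈ W := by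
  intro v hv
  refine hW _ fun w hw => ?_
  rw [hΘsym, hΘ2]
  exact Submodule.inner_left_of_mem_orthogonal hw hv

end Krein

theorem stmt_1 {H : Type*} [NormedAddCommGroup H] [InnerProductSpace ℝ H] [CompleteSpace H]
    (Θ : H →L[ℝ] H) (hΘ2 : ∀ x, Θ (Θ x) = x)
    (hΘsym : ∀ x y, ⟪Θ x, y⟫ = ⟪x, Θ y⟫)
    (W : Submodule ℝ H) (hWclosed : IsClosed (W : Set H))
    (hW : (W : Set H) = {v : H | ∀ w ∈ W, ⟪v, Θ w⟫ = 0}) :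
    ∃! u : H →ₗ[ℝ] H,
      (∀ x, u (u x) = x) ∧
      (∀ x y, ⟪u x, Θ (u y)⟫ = -⟪x, Θ y⟫) ∧
      (∀ x, u (Θ x) = -Θ (u x)) ∧
      {v : H | u v = v} = (W : Set H) := by
  have : CompleteSpace W := hWclosed.completeSpace_coe
  have hΘW := apply_mem_orthogonal_of_neutral (Θ := Θ) fun v hv => hW.le hv
  have hΘWperp := apply_mem_of_mem_orthogonal_of_maximal hΘ2 hΘsym fun v hv => hW.ge hv
  have hanticomm : ∀ x, W.reflection (Θ x) = -Θ (W.reflection x) :=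
    W.reflection_anticomm Θ.toLinearMap hΘ2 hΘW hΘWperp
  refine ⟨W.reflection.toLinearMap, ⟨W.reflection_reflection, fun x y => ?_, hanticomm, ?_⟩, ?_⟩
  · have hΘR : Θ (W.reflection y) = -W.reflection (Θ y) := by
      rw [hanticomm, neg_neg]
    simp [hΘR, inner_neg_right]
  · ext v
    exact W.reflection_eq_self_iff v
  · rintro u ⟨-, -, hΘu, hfix⟩
    ext x
    exact Submodule.apply_eq_reflection_of_anticomm Θ.toLinearMap hΘ2 hΘWperp u hΘu
      (fun w hw => hfix.ge hw) x
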